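/- arXiv:2310.03575 — 7 statements merged into one kernel-verified Lean document; each statement's English description precedes it below -/
import Mathlib

section
/- The closed-form skip-connection strength ĉ := β(λ(1+σ²)+(n−1)σ²)/D satisfies the saddle-point self-consistent equation ĉ = [ (1+σ²)β − (1/(λ+n))( β(1−βĉ)(n+σ²) − α²ĉ ) ] / (α² + β²(1+σ²)), and it is the unique real solution of this equation. -/
/-- The closed-form skip-connection strength satisfies the saddle-point
self-consistent equation and is its unique real solution. -/
theorem stmt_0 (α β σ lam : ℝ) (n : ℕ) (hn : 1 ≤ n)
    (hab : 0 < α ^ 2 + β ^ 2) (hσ : 0 < σ) (hlam : 0 < lam)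
    (D : ℝ) (hD : D = α ^ 2 * (lam + n - 1) + β ^ 2 * (lam * (1 + σ ^ 2) + ((n : ℝ) - 1) * σ ^ 2))
    (c : ℝ) (hc : c = β * (lam * (1 + σ ^ 2) + ((n : ℝ) - 1) * σ ^ 2) / D) :
    c = ((1 + σ ^ 2) * β - (1 / (lam + n)) * (β * (1 - β * c) * ((n : ℝ) + σ ^ 2) - α ^ 2 * c)) /
        (α ^ 2 + β ^ 2 * (1 + σ ^ 2)) ∧
    ∀ c' : ℝ,
      c' = ((1 + σ ^ 2) * β - (1 / (lam + n)) * (β * (1 - β * c') * ((n : ℝ) + σ ^ 2) - α ^ 2 * c')) /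
        (α ^ 2 + β ^ 2 * (1 + σ ^ 2)) → c' = c := by
  have hn1 : (1 : ℝ) ≤ (n : ℝ) := by exact_mod_cast hn
  have hD0 : 0 < D := by
    rw [hD]
    nlinarith [mul_nonneg (sq_nonneg α) (by linarith : (0:ℝ) ≤ (n:ℝ) - 1),
      mul_nonneg (sq_nonneg β) (mul_nonneg hlam.le (sq_nonneg σ)),
      mul_nonneg (sq_nonneg β) (mul_nonneg (by linarith : (0:ℝ) ≤ (n:ℝ) - 1) (sq_nonneg σ)),
      mul_pos hlam hab]
  have hA : 0 < α ^ 2 + β ^ 2 * (1 + σ ^ 2) := by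
    nlinarith [sq_nonneg α, sq_nonneg β, sq_nonneg σ]
  have hln : 0 < lam + (n : ℝ) := by linarith
  have key : ∀ x : ℝ,
      (x = ((1 + σ ^ 2) * β - (1 / (lam + n)) * (β * (1 - β * x) * ((n : ℝ) + σ ^ 2) - α ^ 2 * x)) /
        (α ^ 2 + β ^ 2 * (1 + σ ^ 2))) ↔
      x * D = β * (lam * (1 + σ ^ 2) + ((n : ℝ) - 1) * σ ^ 2) := by
    intro x
    rw [eq_div_iff hA.ne', hD]
    constructor
    · intro h
      field_simp at h
      nlinarith [h]
    · intro h
      field_simp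
      nlinarith [h]
  have hcD : c * D = β * (lam * (1 + σ ^ 2) + ((n : ℝ) - 1) * σ ^ 2) := by
    rw [hc]; field_simp
  refine ⟨(key c).mpr hcD, fun c' h => ?_⟩
  have := (key c').mp h
  have : c' * D = c * D := by rw [this, hcD]
  exact mul_right_cancel₀ hD0.ne' this
end

section
/- Let a, b, m, qξ, qη : ℝ → ℝ be continuous, X : ℝ → E differentiable with X'(t) = a(t)·X(t) + b(t)·(m(t)·μ + qξ(t)·ξ + qη(t)·η) on [0,1], and suppose the orthogonal component X⊥(t) := X(t) − M(t)·μ − Qξ(t)·ξ − Qη(t)·η satisfies ‖X⊥(0)‖² = d, where M(t) := ⟨X(t),μ⟩/d, Qξ(t) := ⟨X(t),ξ⟩/(nd), Qη(t) := ⟨X(t),η⟩/(ndσ²). Then for all t ∈ [0,1]: ‖X(t)‖²/d = M(t)² + n·Qξ(t)² + n·σ²·Qη(t)² + exp(2·∫₀ᵗ a(s) ds). -/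
open scoped RealInnerProductSpace
open Submodule Set

/-!
Split `X = S + X⊥`, where `S = M • μ + Qξ • ξ + Qη • η` is the orthogonal projection of `X` onto
`K = span {μ, ξ, η}`. The forcing term `b • (m • μ + qξ • ξ + qη • η)` lies in `K`, so projecting
the flow onto `Kᗮ` leaves the scalar linear equation `X⊥' = a • X⊥`, whence
`X⊥ t = exp (∫₀ᵗ a) • X⊥ 0`. Pythagoras in `K ⊕ Kᗮ` then gives the formula.
-/

section OrthogonalFamily

variable {E : Type*} [NormedAddCommGroup E] [InnerProductSpace ℝ E]

instance FiniteDimensional.span_range_of_finite {ι : Type*} [Finite ι] (v : ι → E) :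
    FiniteDimensional ℝ (span ℝ (range v)) :=
  FiniteDimensional.span_of_finite ℝ (finite_range v)

theorem HasDerivAt.starProjection_orthogonal_comp {K : Submodule ℝ E} [K.HasOrthogonalProjection]
    {X : ℝ → E} {a b t : ℝ} {w : E} (hw : w ∈ K) (hX : HasDerivAt X (a • X t + b • w) t) :
    HasDerivAt (fun s => Kᗮ.starProjection (X s)) (a • Kᗮ.starProjection (X t)) t := by
  have := Kᗮ.starProjection.hasFDerivAt.comp_hasDerivAt t hX
  rwa [map_add, map_smul, map_smul, starProjection_orthogonal_apply_eq_zero hw, smul_zero,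
    add_zero] at this

variable {ι : Type*} [Fintype ι] {v : ι → E}

theorem inner_div_norm_sq_mul_norm_sq (x w : E) : ⟪x, w⟫ / ‖w‖ ^ 2 * ‖w‖ ^ 2 = ⟪x, w⟫ :=
  div_mul_cancel_of_imp fun h => by
    rw [norm_eq_zero.1 ((pow_eq_zero_iff two_ne_zero).1 h), inner_zero_right]

theorem inner_sub_sum_smul_eq_zero (hv : Pairwise fun i j => ⟪v i, v j⟫ = 0) (x : E) (j : ι) :
    ⟪x - ∑ i, (⟪x, v i⟫ / ‖v i‖ ^ 2) • v i, v j⟫ = 0 := by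
  rw [inner_sub_left, sum_inner, Finset.sum_eq_single j
    (fun i _ hij => by rw [real_inner_smul_left, hv hij, mul_zero]) (by simp),
    real_inner_smul_left, real_inner_self_eq_norm_sq, inner_div_norm_sq_mul_norm_sq, sub_self]

theorem sub_sum_smul_mem_orthogonal (hv : Pairwise fun i j => ⟪v i, v j⟫ = 0) (x : E) :
    x - ∑ i, (⟪x, v i⟫ / ‖v i‖ ^ 2) • v i ∈ (span ℝ (range v))ᗮ := by
  have : span ℝ (range v) ≤ (ℝ ∙ (x - ∑ i, (⟪x, v i⟫ / ‖v i‖ ^ 2) • v i))ᗮ := by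
    rw [span_le]
    rintro _ ⟨j, rfl⟩
    exact mem_orthogonal_singleton_iff_inner_right.2 (inner_sub_sum_smul_eq_zero hv x j)
  exact (mem_orthogonal _ _).2 fun u hu => by
    rw [real_inner_comm]; exact mem_orthogonal_singleton_iff_inner_right.1 (this hu)

theorem starProjection_orthogonal_span_range (hv : Pairwise fun i j => ⟪v i, v j⟫ = 0) (x : E) :
    (span ℝ (range v))ᗮ.starProjection x = x - ∑ i, (⟪x, v i⟫ / ‖v i‖ ^ 2) • v i :=
  eq_starProjection_of_mem_orthogonal (sub_sum_smul_mem_orthogonal hv x) <| by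
    rw [sub_sub_cancel]
    exact le_orthogonal_orthogonal _ <| sum_mem fun i _ => smul_mem _ _ <| subset_span ⟨i, rfl⟩

theorem norm_sum_smul_sq_of_pairwise_inner_eq_zero (hv : Pairwise fun i j => ⟪v i, v j⟫ = 0)
    (c : ι → ℝ) :
    ‖∑ i, c i • v i‖ ^ 2 = ∑ i, c i ^ 2 * ‖v i‖ ^ 2 := by
  rw [← real_inner_self_eq_norm_sq, sum_inner]
  refine Finset.sum_congr rfl fun i _ => ?_
  rw [inner_sum, Finset.sum_eq_single i
    (fun j _ hji => by rw [real_inner_smul_left, real_inner_smul_right, hv hji.symm]; ring)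
    (by simp), real_inner_smul_left, real_inner_smul_right, real_inner_self_eq_norm_sq]
  ring

theorem norm_sq_eq_sum_add_norm_sq_starProjection_orthogonal
    (hv : Pairwise fun i j => ⟪v i, v j⟫ = 0) (x : E) :
    ‖x‖ ^ 2 = ∑ i, (⟪x, v i⟫ / ‖v i‖ ^ 2) ^ 2 * ‖v i‖ ^ 2
      + ‖(span ℝ (range v))ᗮ.starProjection x‖ ^ 2 := by
  rw [norm_sq_eq_add_norm_sq_starProjection x (span ℝ (range v)),
    ← norm_sum_smul_sq_of_pairwise_inner_eq_zero hv, eq_sub_of_add_eq (starProjection_add_starProjection_orthogonal x),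
    starProjection_orthogonal_span_range hv, sub_sub_cancel]

end OrthogonalFamily

theorem eq_exp_integral_smul_of_hasDerivAt {F : Type*} [NormedAddCommGroup F] [NormedSpace ℝ F]
    {f : ℝ → F} {a : ℝ → ℝ} {t₀ t₁ : ℝ} (ha : Continuous a)
    (hf : ∀ t ∈ Icc t₀ t₁, HasDerivAt f (a t • f t) t) :
    ∀ t ∈ Icc t₀ t₁, f t = Real.exp (∫ s in t₀..t, a s) • f t₀ := by
  set A : ℝ → ℝ := fun t => ∫ s in t₀..t, a s
  have hA (t : ℝ) : HasDerivAt A (a t) t :=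
    intervalIntegral.integral_hasDerivAt_right (ha.intervalIntegrable _ _)
      (ha.stronglyMeasurableAtFilter _ _) ha.continuousAt
  have hg : ∀ t ∈ Icc t₀ t₁, HasDerivAt (fun t => Real.exp (-A t) • f t) 0 t := fun t ht =>
    ((hA t).neg.exp.smul (hf t ht)).congr_deriv (by simp only [Pi.neg_apply]; module)
  intro t ht
  have hconst := constant_of_has_deriv_right_zero
    (fun t ht => (hg t ht).continuousAt.continuousWithinAt)
    (fun t ht => (hg t (Ico_subset_Icc_self ht)).hasDerivWithinAt) t ht
  simp only [A, intervalIntegral.integral_same, neg_zero, Real.exp_zero, one_smul] at hconst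
  rw [← hconst, smul_smul, ← Real.exp_add, add_neg_cancel, Real.exp_zero, one_smul]

theorem stmt_5_general {E : Type*} [NormedAddCommGroup E] [InnerProductSpace ℝ E]
    (d σ : ℝ) (hd : 0 < d) (n : ℕ)
    (μ ξ η : E)
    (hμξ : ⟪μ, ξ⟫ = 0) (hμη : ⟪μ, η⟫ = 0) (hξη : ⟪ξ, η⟫ = 0)
    (hμ : ‖μ‖ ^ 2 = d) (hξ : ‖ξ‖ ^ 2 = n * d) (hη : ‖η‖ ^ 2 = n * d * σ ^ 2)
    (a b m qξ qη : ℝ → ℝ)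
    (ha : Continuous a)
    (X : ℝ → E)
    (hX : ∀ t ∈ Set.Icc (0 : ℝ) 1,
      HasDerivAt X (a t • X t + b t • (m t • μ + qξ t • ξ + qη t • η)) t)
    (M Qξ Qη : ℝ → ℝ) (Xperp : ℝ → E)
    (hM : M = fun t => ⟪X t, μ⟫ / d)
    (hQξ : Qξ = fun t => ⟪X t, ξ⟫ / (n * d))
    (hQη : Qη = fun t => ⟪X t, η⟫ / (n * d * σ ^ 2))
    (hXperp : Xperp = fun t => X t - M t • μ - Qξ t • ξ - Qη t • η)
    (hinit : ‖Xperp 0‖ ^ 2 = d) :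
    ∀ t ∈ Set.Icc (0 : ℝ) 1,
      ‖X t‖ ^ 2 / d =
        M t ^ 2 + n * Qξ t ^ 2 + n * σ ^ 2 * Qη t ^ 2 +
          Real.exp (2 * ∫ s in (0 : ℝ)..t, a s) := by
  set v : Fin 3 → E := ![μ, ξ, η]
  have hv : Pairwise fun i j => ⟪v i, v j⟫ = 0 := by
    intro i j hij
    fin_cases i <;> fin_cases j <;> simp_all [v, real_inner_comm]
  set K := span ℝ (range v)
  have hXperp_eq (t : ℝ) : Xperp t = Kᗮ.starProjection (X t) := by
    rw [starProjection_orthogonal_span_range hv, Fin.sum_univ_three, hXperp, hM, hQξ, hQη]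
    simp only [v, Matrix.cons_val_zero, Matrix.cons_val_one, Matrix.cons_val_two, Matrix.head_cons,
      Matrix.tail_cons, hμ, hξ, hη, sub_sub]
  have hdrift : ∀ t ∈ Icc (0 : ℝ) 1, HasDerivAt Xperp (a t • Xperp t) t := by
    intro t ht
    have hw : m t • μ + qξ t • ξ + qη t • η ∈ K :=
      add_mem (add_mem (smul_mem _ _ (subset_span ⟨0, rfl⟩)) (smul_mem _ _ (subset_span ⟨1, rfl⟩)))
        (smul_mem _ _ (subset_span ⟨2, rfl⟩))
    rw [funext hXperp_eq]
    exact (hX t ht).starProjection_orthogonal_comp hw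
  intro t ht
  have hnorm : ‖Xperp t‖ ^ 2 = d * Real.exp (2 * ∫ s in (0 : ℝ)..t, a s) := by
    rw [eq_exp_integral_smul_of_hasDerivAt ha hdrift t ht, norm_smul, mul_pow, hinit,
      Real.norm_eq_abs, sq_abs, ← Real.exp_nat_mul]
    push_cast; ring
  rw [norm_sq_eq_sum_add_norm_sq_starProjection_orthogonal hv (X t), ← hXperp_eq, hnorm,
    Fin.sum_univ_three]
  simp only [v, Matrix.cons_val_zero, Matrix.cons_val_one, Matrix.cons_val_two, Matrix.head_cons,
      Matrix.tail_cons, hM, hQξ, hQη, hμ, hξ, hη]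
  field_simp

/-- The normalized squared norm of the transported sample decomposes into the
summary statistics plus the exponential factor from the orthogonal component. -/
theorem stmt_5 {E : Type*} [NormedAddCommGroup E] [InnerProductSpace ℝ E]
    (d σ : ℝ) (hd : 0 < d) (hσ : 0 < σ) (n : ℕ) (hn : 1 ≤ n)
    (μ ξ η : E)
    (hμξ : ⟪μ, ξ⟫ = 0) (hμη : ⟪μ, η⟫ = 0) (hξη : ⟪ξ, η⟫ = 0)
    (hμ : ‖μ‖ ^ 2 = d) (hξ : ‖ξ‖ ^ 2 = n * d) (hη : ‖η‖ ^ 2 = n * d * σ ^ 2)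
    (a b m qξ qη : ℝ → ℝ)
    (ha : Continuous a) (hb : Continuous b) (hm : Continuous m)
    (hqξ : Continuous qξ) (hqη : Continuous qη)
    (X : ℝ → E)
    (hX : ∀ t ∈ Set.Icc (0 : ℝ) 1,
      HasDerivAt X (a t • X t + b t • (m t • μ + qξ t • ξ + qη t • η)) t)
    (M Qξ Qη : ℝ → ℝ) (Xperp : ℝ → E)
    (hM : M = fun t => ⟪X t, μ⟫ / d)
    (hQξ : Qξ = fun t => ⟪X t, ξ⟫ / (n * d))
    (hQη : Qη = fun t => ⟪X t, η⟫ / (n * d * σ ^ 2))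
    (hXperp : Xperp = fun t => X t - M t • μ - Qξ t • ξ - Qη t • η)
    (hinit : ‖Xperp 0‖ ^ 2 = d) :
    ∀ t ∈ Set.Icc (0 : ℝ) 1,
      ‖X t‖ ^ 2 / d =
        M t ^ 2 + n * Qξ t ^ 2 + n * σ ^ 2 * Qη t ^ 2 +
          Real.exp (2 * ∫ s in (0 : ℝ)..t, a s) :=
  stmt_5_general d σ hd n μ ξ η hμξ hμη hξη hμ hξ hη a b m qξ qη ha X hX M Qξ Qη Xperp hM hQξ hQη
    hXperp hinit
end

section
/- Let σ>0 and let α, β : [0,1] → ℝ be continuously differentiable with β(0)=0, β(1)=1 and α(t) ≠ 0 for all t ∈ [0,1). Define c(t) := β(t)σ²/(α(t)²+β(t)²σ²). Then M(t) := β(t) is the unique solution on [0,1) of the linear ODE M'(t) = ( β'(t)c(t) + (α'(t)/α(t))·(1−c(t)β(t)) )·M(t) + ( β'(t) − (α'(t)/α(t))·β(t) )·α(t)²/(α(t)²+β(t)²σ²) with initial condition M(0)=0; in particular M(t) → 1 as t → 1. -/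
/-!
With `D = α² + β²σ²`, the drift coefficient `β' c + (α'/α)(1 - cβ)` equals `D' / (2D)`, i.e. the
logarithmic derivative of `√D`. The difference `g` of two solutions therefore satisfies
`g' = (D'/2D) g`, so `g² / D` has zero derivative; it vanishes at `0`, hence `g = 0`.
That `β` itself solves the equation is an algebraic identity, and `β(t) → 1` is continuity at `1`.
-/

open Set

theorem eq_zero_of_hasDerivAt_half_logDeriv_mul {a b : ℝ} {D D' g : ℝ → ℝ}
    (hD : ∀ t ∈ Ico a b, HasDerivAt D (D' t) t) (hD0 : ∀ t ∈ Ico a b, D t ≠ 0)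
    (hg : ∀ t ∈ Ico a b, HasDerivAt g (D' t / (2 * D t) * g t) t) (hga : g a = 0) :
    ∀ t ∈ Ico a b, g t = 0 := by
  have hsq_div_deriv : ∀ t ∈ Ico a b, HasDerivAt (g * g / D) 0 t := by
    intro t ht
    refine (((hg t ht).mul (hg t ht)).div (hD t ht) (hD0 t ht)).congr_deriv ?_
    have := hD0 t ht
    simp only [Pi.mul_apply]
    field_simp
    ring
  intro t ht
  have hsub : Icc a t ⊆ Ico a b := Icc_subset_Ico_right ht.2
  have hconst := constant_of_has_deriv_right_zero
    (fun s hs => (hsq_div_deriv s (hsub hs)).continuousAt.continuousWithinAt)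
    (fun s hs => (hsq_div_deriv s (hsub (Ico_subset_Icc_self hs))).hasDerivWithinAt) t ⟨ht.1, le_rfl⟩
  simpa [hga, hD0 t ht] using hconst

section Algebra

variable {x y x' y' s : ℝ}

theorem sq_add_sq_mul_ne_zero (hx : x ≠ 0) : x ^ 2 + y ^ 2 * s ^ 2 ≠ 0 := by
  positivity

theorem drift_eq_half_logDeriv (hx : x ≠ 0) :
    y' * (y * s ^ 2 / (x ^ 2 + y ^ 2 * s ^ 2)) +
        x' / x * (1 - y * s ^ 2 / (x ^ 2 + y ^ 2 * s ^ 2) * y) =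
      2 * (x * x' + y * y' * s ^ 2) / (2 * (x ^ 2 + y ^ 2 * s ^ 2)) := by
  have := sq_add_sq_mul_ne_zero (y := y) (s := s) hx
  field_simp
  ring

theorem drift_mul_add_forcing_eq (hx : x ≠ 0) :
    (y' * (y * s ^ 2 / (x ^ 2 + y ^ 2 * s ^ 2)) +
        x' / x * (1 - y * s ^ 2 / (x ^ 2 + y ^ 2 * s ^ 2) * y)) * y +
      (y' - x' / x * y) * (x ^ 2 / (x ^ 2 + y ^ 2 * s ^ 2)) = y' := by
  have := sq_add_sq_mul_ne_zero (y := y) (s := s) hx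
  field_simp
  ring

end Algebra

theorem stmt_7_general (σ : ℝ) (α β α' β' : ℝ → ℝ)
    (hα : ∀ t ∈ Set.Icc (0 : ℝ) 1, HasDerivAt α (α' t) t)
    (hβ : ∀ t ∈ Set.Icc (0 : ℝ) 1, HasDerivAt β (β' t) t)
    (hβ0 : β 0 = 0) (hβ1 : β 1 = 1)
    (hαne : ∀ t ∈ Set.Ico (0 : ℝ) 1, α t ≠ 0)
    (c : ℝ → ℝ) (hc : c = fun t => β t * σ ^ 2 / (α t ^ 2 + β t ^ 2 * σ ^ 2)) :
    (∀ t ∈ Set.Ico (0 : ℝ) 1,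
      HasDerivAt β
        ((β' t * c t + α' t / α t * (1 - c t * β t)) * β t +
          (β' t - α' t / α t * β t) * (α t ^ 2 / (α t ^ 2 + β t ^ 2 * σ ^ 2))) t) ∧
    (∀ N : ℝ → ℝ, N 0 = 0 →
      (∀ t ∈ Set.Ico (0 : ℝ) 1,
        HasDerivAt N
          ((β' t * c t + α' t / α t * (1 - c t * β t)) * N t +
            (β' t - α' t / α t * β t) * (α t ^ 2 / (α t ^ 2 + β t ^ 2 * σ ^ 2))) t) →
      ∀ t ∈ Set.Ico (0 : ℝ) 1, N t = β t) ∧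
    Filter.Tendsto β (nhdsWithin 1 (Set.Iio 1)) (nhds 1) := by
  subst hc
  beta_reduce
  refine ⟨fun t ht => (hβ t (Ico_subset_Icc_self ht)).congr_deriv
    (drift_mul_add_forcing_eq (hαne t ht)).symm, fun N hN0 hN t ht => ?_, ?_⟩
  · have hD : ∀ t ∈ Ico (0 : ℝ) 1, HasDerivAt (fun s => α s ^ 2 + β s ^ 2 * σ ^ 2)
        (2 * (α t * α' t + β t * β' t * σ ^ 2)) t := fun t ht => by
      refine (((hα t (Ico_subset_Icc_self ht)).fun_pow 2).add
        (((hβ t (Ico_subset_Icc_self ht)).fun_pow 2).mul_const (σ ^ 2))).congr_deriv ?_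
      ring
    have hdiff : ∀ t ∈ Ico (0 : ℝ) 1, HasDerivAt (N - β)
        (2 * (α t * α' t + β t * β' t * σ ^ 2) / (2 * (α t ^ 2 + β t ^ 2 * σ ^ 2)) *
          (N - β) t) t := fun t ht => by
      refine ((hN t ht).sub (hβ t (Ico_subset_Icc_self ht))).congr_deriv ?_
      rw [← drift_eq_half_logDeriv (hαne t ht), Pi.sub_apply]
      linear_combination
        drift_mul_add_forcing_eq (y := β t) (s := σ) (x' := α' t) (y' := β' t) (hαne t ht)
    exact sub_eq_zero.mp (eq_zero_of_hasDerivAt_half_logDeriv_mul hD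
      (fun t ht => sq_add_sq_mul_ne_zero (hαne t ht)) hdiff (by simp [hN0, hβ0]) t ht)
  · simpa [hβ1] using (hβ 1 ⟨zero_le_one, le_rfl⟩).continuousAt.continuousWithinAt.tendsto

/-- `M(t) = β(t)` is the unique solution of the exact-flow summary-statistic ODE with
`M(0) = 0`, and `M(t) → 1` as `t → 1⁻`. -/
theorem stmt_7 (σ : ℝ) (hσ : 0 < σ) (α β α' β' : ℝ → ℝ)
    (hα : ∀ t ∈ Set.Icc (0 : ℝ) 1, HasDerivAt α (α' t) t)
    (hβ : ∀ t ∈ Set.Icc (0 : ℝ) 1, HasDerivAt β (β' t) t)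
    (hα' : ContinuousOn α' (Set.Icc 0 1)) (hβ' : ContinuousOn β' (Set.Icc 0 1))
    (hβ0 : β 0 = 0) (hβ1 : β 1 = 1)
    (hαne : ∀ t ∈ Set.Ico (0 : ℝ) 1, α t ≠ 0)
    (c : ℝ → ℝ) (hc : c = fun t => β t * σ ^ 2 / (α t ^ 2 + β t ^ 2 * σ ^ 2)) :
    (∀ t ∈ Set.Ico (0 : ℝ) 1,
      HasDerivAt β
        ((β' t * c t + α' t / α t * (1 - c t * β t)) * β t +
          (β' t - α' t / α t * β t) * (α t ^ 2 / (α t ^ 2 + β t ^ 2 * σ ^ 2))) t) ∧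
    (∀ N : ℝ → ℝ, N 0 = 0 →
      (∀ t ∈ Set.Ico (0 : ℝ) 1,
        HasDerivAt N
          ((β' t * c t + α' t / α t * (1 - c t * β t)) * N t +
            (β' t - α' t / α t * β t) * (α t ^ 2 / (α t ^ 2 + β t ^ 2 * σ ^ 2))) t) →
      ∀ t ∈ Set.Ico (0 : ℝ) 1, N t = β t) ∧
    Filter.Tendsto β (nhdsWithin 1 (Set.Iio 1)) (nhds 1) :=
  stmt_7_general σ α β α' β' hα hβ hβ0 hβ1 hαne c hc
end

section
/- With ĉ := β(λ(1+σ²)+(n−1)σ²)/D and s := α²+β²σ² (so s > 0), one has the exact identity ĉ − βσ²/s = λ·α²·β/(s·D). Consequently, viewing ĉ = ĉₙ as a function of the integer n with α, β, σ, λ fixed, ĉₙ → βσ²/s and n·(ĉₙ − βσ²/s) → λα²β/s² as n → ∞; in particular the deviation of the learnt skip-connection strength from its oracle value βσ²/(α²+β²σ²) is O(1/n). -/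
/-- The deviation of the learnt skip-connection strength from its oracle value
`βσ²/s` equals `λα²β/(sD)` exactly, hence is `O(1/n)`:
`ĉₙ → βσ²/s` and `n(ĉₙ − βσ²/s) → λα²β/s²`. -/
theorem stmt_12 (α β σ lam : ℝ) (hab : 0 < α ^ 2 + β ^ 2) (hσ : 0 < σ) (hlam : 0 < lam)
    (s : ℝ) (hs : s = α ^ 2 + β ^ 2 * σ ^ 2)
    (D c : ℕ → ℝ)
    (hD : ∀ n : ℕ,
      D n = α ^ 2 * (lam + n - 1) + β ^ 2 * (lam * (1 + σ ^ 2) + ((n : ℝ) - 1) * σ ^ 2))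
    (hc : ∀ n : ℕ, c n = β * (lam * (1 + σ ^ 2) + ((n : ℝ) - 1) * σ ^ 2) / D n) :
    (∀ n : ℕ, 1 ≤ n → c n - β * σ ^ 2 / s = lam * α ^ 2 * β / (s * D n)) ∧
    Filter.Tendsto c Filter.atTop (nhds (β * σ ^ 2 / s)) ∧
    Filter.Tendsto (fun n : ℕ => (n : ℝ) * (c n - β * σ ^ 2 / s)) Filter.atTop
      (nhds (lam * α ^ 2 * β / s ^ 2)) := by
  have hσ2 : (0:ℝ) < σ ^ 2 := by positivity
  have hs0 : 0 < s := by
    rw [hs]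
    rcases eq_or_ne α 0 with h | h
    · have hb : 0 < β ^ 2 := by nlinarith [sq_nonneg α]
      nlinarith [mul_pos hb hσ2]
    · have ha : 0 < α ^ 2 := by positivity
      nlinarith [sq_nonneg (β * σ)]
  set T : ℝ := lam * (α ^ 2 + β ^ 2 * (1 + σ ^ 2)) with hT
  have hT0 : 0 < T := by
    have : 0 < α ^ 2 + β ^ 2 * (1 + σ ^ 2) := by nlinarith [sq_nonneg β]
    exact mul_pos hlam this
  have hDlin : ∀ n : ℕ, D n = s * ((n:ℝ) - 1) + T := by
    intro n; rw [hD, hs, hT]; ring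
  have hDpos : ∀ n : ℕ, 1 ≤ n → 0 < D n := by
    intro n hn
    rw [hDlin]
    have h1 : (1:ℝ) ≤ (n:ℝ) := by exact_mod_cast hn
    nlinarith
  have key : ∀ n : ℕ, 1 ≤ n → c n - β * σ ^ 2 / s = lam * α ^ 2 * β / (s * D n) := by
    intro n hn
    have hDn := (hDpos n hn).ne'
    rw [hc n, div_sub_div _ _ hDn hs0.ne',
      div_eq_div_iff (mul_ne_zero hDn hs0.ne') (mul_ne_zero hs0.ne' hDn), hD, hs]
    ring
  refine ⟨key, ?_, ?_⟩
  · have hDtop : Filter.Tendsto D Filter.atTop Filter.atTop := by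
      have h1 : Filter.Tendsto (fun n : ℕ => s * ((n:ℝ) - 1) + T) Filter.atTop Filter.atTop := by
        apply Filter.tendsto_atTop_add_const_right
        apply Filter.Tendsto.const_mul_atTop hs0
        apply Filter.tendsto_atTop_add_const_right
        exact tendsto_natCast_atTop_atTop
      convert h1 using 1
      funext n; exact hDlin n
    have h2 : Filter.Tendsto (fun n : ℕ => lam * α ^ 2 * β / (s * D n)) Filter.atTop (nhds 0) := by
      have := (hDtop.const_mul_atTop hs0).inv_tendsto_atTop
      simpa [div_eq_mul_inv] using this.const_mul (lam * α ^ 2 * β)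
    have h3 : Filter.Tendsto (fun n : ℕ => β * σ ^ 2 / s + lam * α ^ 2 * β / (s * D n))
        Filter.atTop (nhds (β * σ ^ 2 / s)) := by
      simpa using (tendsto_const_nhds.add h2)
    refine h3.congr' ?_
    filter_upwards [Filter.eventually_ge_atTop 1] with n hn
    have := key n hn
    linarith
  · have h4 : Filter.Tendsto (fun n : ℕ => s + (T - s) / (n:ℝ)) Filter.atTop (nhds s) := by
      have := tendsto_const_div_atTop_nhds_zero_nat (T - s)
      simpa using (tendsto_const_nhds.add this)
    have h5 := h4.inv₀ (ne_of_gt hs0)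
    have h6 : Filter.Tendsto (fun n : ℕ => lam * α ^ 2 * β / s * (s + (T - s) / (n:ℝ))⁻¹)
        Filter.atTop (nhds (lam * α ^ 2 * β / s ^ 2)) := by
      have h7 := h5.const_mul (lam * α ^ 2 * β / s)
      have : lam * α ^ 2 * β / s * s⁻¹ = lam * α ^ 2 * β / s ^ 2 := by
        rw [← div_eq_mul_inv, div_div, ← sq]
      rwa [this] at h7
    refine h6.congr' ?_
    filter_upwards [Filter.eventually_ge_atTop 1] with n hn
    have hDn := hDpos n hn
    have hn1 : (1:ℝ) ≤ (n:ℝ) := by exact_mod_cast hn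
    have hnpos : (0:ℝ) < n := by linarith
    rw [key n hn, hDlin n]
    rw [hDlin n] at hDn
    have h8 : s + (T - s) / (n:ℝ) = (s * ((n:ℝ) - 1) + T) / (n:ℝ) := by
      field_simp
      ring
    rw [h8, inv_div, div_mul_div_comm, ← mul_div_assoc,
      mul_comm ((n:ℝ)) (lam * α ^ 2 * β)]
end

section
/- With s := α²+β²σ² (so s > 0) and m = mₙ := (n/(λ+n))·α²(λ+n−1)/Dₙ viewed as a function of the integer n with α, β, σ, λ fixed, one has mₙ → α²/s and n·(mₙ − α²/s) → −λ·α²·(α²+β²(1+σ²))/s² as n → ∞; in particular the deviation of the mean-component of the trained weight vector from its oracle value α²/(α²+β²σ²) is O(1/n). -/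
/-- The mean-component of the trained weight vector converges to its oracle value
`α²/s` with an `O(1/n)` deviation: `mₙ → α²/s` and
`n(mₙ − α²/s) → −λα²(α²+β²(1+σ²))/s²`. -/
theorem stmt_13 (α β σ lam : ℝ) (hab : 0 < α ^ 2 + β ^ 2) (hσ : 0 < σ) (hlam : 0 < lam)
    (s : ℝ) (hs : s = α ^ 2 + β ^ 2 * σ ^ 2)
    (D m : ℕ → ℝ)
    (hD : ∀ n : ℕ,
      D n = α ^ 2 * (lam + n - 1) + β ^ 2 * (lam * (1 + σ ^ 2) + ((n : ℝ) - 1) * σ ^ 2))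
    (hm : ∀ n : ℕ, m n = ((n : ℝ) / (lam + n)) * (α ^ 2 * (lam + n - 1) / D n)) :
    Filter.Tendsto m Filter.atTop (nhds (α ^ 2 / s)) ∧
    Filter.Tendsto (fun n : ℕ => (n : ℝ) * (m n - α ^ 2 / s)) Filter.atTop
      (nhds (-(lam * α ^ 2 * (α ^ 2 + β ^ 2 * (1 + σ ^ 2))) / s ^ 2)) := by
  set c : ℝ := α ^ 2 * (lam - 1) + β ^ 2 * (lam * (1 + σ ^ 2) - σ ^ 2) with hc
  have hs0 : 0 < s := by
    nlinarith [mul_pos hab (mul_pos hσ hσ), sq_nonneg α, sq_nonneg (β * σ * σ)]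
  have hDn : ∀ n : ℕ, D n = s * n + c := by
    intro n; rw [hD n, hs, hc]; ring
  have hDpos : ∀ n : ℕ, 1 ≤ n → 0 < s * n + c := by
    intro n hn
    have h1 : (1 : ℝ) ≤ n := by exact_mod_cast hn
    nlinarith [mul_pos hlam hab, mul_nonneg (sq_nonneg β) (sq_nonneg σ),
      mul_nonneg (show (0:ℝ) ≤ (n:ℝ) - 1 by linarith) hs0.le,
      mul_nonneg hlam.le (mul_nonneg (sq_nonneg β) (sq_nonneg σ))]
  have hinv : Filter.Tendsto (fun n : ℕ => ((n : ℝ))⁻¹) Filter.atTop (nhds 0) :=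
    tendsto_inv_atTop_nhds_zero_nat
  -- the two rational functions of u = 1/n
  set g : ℝ → ℝ := fun u => α ^ 2 * (1 + (lam - 1) * u) / ((1 + lam * u) * (s + c * u)) with hgdef
  set h : ℝ → ℝ := fun u =>
    -(α ^ 2) * ((s + c) + c * lam * u) / (s * ((1 + lam * u) * (s + c * u))) with hhdef
  have hden : ((1 : ℝ) + lam * 0) * (s + c * 0) ≠ 0 := by
    simp; positivity
  have hgc : ContinuousAt g 0 := by
    apply ContinuousAt.div
    · fun_prop
    · fun_prop
    · exact hden
  have hhc : ContinuousAt h 0 := by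
    apply ContinuousAt.div
    · fun_prop
    · fun_prop
    · simpa using mul_ne_zero hs0.ne' hden
  have key : ∀ n : ℕ, 1 ≤ n →
      g ((n : ℝ)⁻¹) = m n ∧ h ((n : ℝ)⁻¹) = (n : ℝ) * (m n - α ^ 2 / s) := by
    intro n hn
    have hn0 : (0 : ℝ) < n := by exact_mod_cast hn
    have hln : (0 : ℝ) < lam + n := by linarith
    have hDp : 0 < s * n + c := hDpos n hn
    have e1 : (1 : ℝ) + lam * (n : ℝ)⁻¹ ≠ 0 := by
      have : (1 : ℝ) + lam * (n : ℝ)⁻¹ = (lam + n) / n := by field_simp; ring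
      rw [this]; positivity
    have e2 : s + c * (n : ℝ)⁻¹ ≠ 0 := by
      have : s + c * (n : ℝ)⁻¹ = (s * n + c) / n := by field_simp
      rw [this]; positivity
    constructor
    · rw [hgdef, hm n, hDn n]
      field_simp
      try ring
    · rw [hhdef, hm n, hDn n]
      field_simp
      try ring
  have hev : ∀ᶠ n : ℕ in Filter.atTop, g ((n : ℝ)⁻¹) = m n :=
    Filter.eventually_atTop.2 ⟨1, fun n hn => (key n hn).1⟩
  have hev2 : ∀ᶠ n : ℕ in Filter.atTop,
      h ((n : ℝ)⁻¹) = (n : ℝ) * (m n - α ^ 2 / s) :=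
    Filter.eventually_atTop.2 ⟨1, fun n hn => (key n hn).2⟩
  have hg0 : g 0 = α ^ 2 / s := by
    rw [hgdef]; simp
  have hh0 : h 0 = -(lam * α ^ 2 * (α ^ 2 + β ^ 2 * (1 + σ ^ 2))) / s ^ 2 := by
    rw [hhdef]
    simp only [mul_zero, add_zero]
    rw [hs, hc]; ring
  constructor
  · refine Filter.Tendsto.congr' hev ?_
    rw [← hg0]
    exact hgc.tendsto.comp hinv
  · refine Filter.Tendsto.congr' hev2 ?_
    rw [← hh0]
    exact hhc.tendsto.comp hinv
end

section
/- With ĉ := β(λ(1+σ²)+(n−1)σ²)/D and the closed-form components m := (n/(λ+n))·α²(λ+n−1)/D, qξ := −(1/(λ+n))·αβ(λ(1+σ²)+(n−1)σ²)/D, qη := (1/(λ+n))·α²(λ+n−1)/D, the following Pythagorean identity holds: ( n²(1−ĉβ)² + n(α²ĉ² + σ²(1−ĉβ)²) )/(λ+n)² = m² + n·qξ² + n·σ²·qη². (The left-hand side is the closed-form value of the squared norm ‖ŵ‖²/d of the trained weight vector; the identity expresses that ŵ is asymptotically contained in span(μ,ξ,η).) -/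
/-- Pythagorean identity for the squared norm of the trained weight vector:
`(n²(1−ĉβ)² + n(α²ĉ² + σ²(1−ĉβ)²))/(λ+n)² = m² + n qξ² + n σ² qη²`. -/
theorem stmt_15 (α β σ lam : ℝ) (n : ℕ) (hn : 1 ≤ n)
    (hab : 0 < α ^ 2 + β ^ 2) (hσ : 0 < σ) (hlam : 0 < lam)
    (D c m qξ qη : ℝ)
    (hD : D = α ^ 2 * (lam + n - 1) + β ^ 2 * (lam * (1 + σ ^ 2) + ((n : ℝ) - 1) * σ ^ 2))
    (hc : c = β * (lam * (1 + σ ^ 2) + ((n : ℝ) - 1) * σ ^ 2) / D)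
    (hm : m = ((n : ℝ) / (lam + n)) * (α ^ 2 * (lam + n - 1) / D))
    (hqξ : qξ = -(1 / (lam + n)) * (α * β * (lam * (1 + σ ^ 2) + ((n : ℝ) - 1) * σ ^ 2) / D))
    (hqη : qη = (1 / (lam + n)) * (α ^ 2 * (lam + n - 1) / D)) :
    ((n : ℝ) ^ 2 * (1 - c * β) ^ 2 + n * (α ^ 2 * c ^ 2 + σ ^ 2 * (1 - c * β) ^ 2)) /
        (lam + n) ^ 2 =
      m ^ 2 + n * qξ ^ 2 + n * σ ^ 2 * qη ^ 2 := by
  have hn1 : (1:ℝ) ≤ (n:ℝ) := by exact_mod_cast hn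
  have hDpos : 0 < D := by
    rw [hD]
    rcases lt_or_ge 0 (α^2) with ha | ha
    · nlinarith [sq_nonneg β, sq_nonneg σ, mul_nonneg (sq_nonneg β) (sq_nonneg σ)]
    · have ha0 : α ^ 2 = 0 := le_antisymm ha (sq_nonneg _)
      have hb : 0 < β ^ 2 := by nlinarith
      nlinarith [mul_pos hb hlam, mul_nonneg (mul_pos hb hlam).le (sq_nonneg σ),
        mul_nonneg (mul_nonneg hb.le (by linarith : (0:ℝ) ≤ (n:ℝ) - 1)) (sq_nonneg σ),
        mul_nonneg (sq_nonneg α) (by linarith : (0:ℝ) ≤ lam + (n:ℝ) - 1)]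
  have hD0 : D ≠ 0 := ne_of_gt hDpos
  have hln : (lam + (n:ℝ)) ≠ 0 := by positivity
  have hkey : 1 - c * β = α ^ 2 * (lam + n - 1) / D := by
    rw [hc]; field_simp; linear_combination hD
  rw [hkey, hc, hm, hqξ, hqη]
  field_simp
  ring
end

section
/- For every σ > 0, every integer n ≥ 1 and every real λ ≥ 0: (λ² + n·σ²)/(λ+n)² ≥ σ²/(n+σ²), with equality if and only if λ = σ². In particular, the minimum over λ ≥ 0 of the no-skip-connection generative model's mean squared error (λ²+nσ²)/(λ+n)² is achieved at λ = σ² and equals the Bayes-optimal MSE σ²/(n+σ²); moreover n·(λ²+nσ²)/(λ+n)² → σ² as n → ∞, so this MSE decays as Θ(1/n). -/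
/-!
Clearing denominators, `(λ² + nσ²)(n + σ²) - σ²(λ + n)² = n(λ - σ²)²`, so the gap between the
two errors is a nonnegative multiple of `(λ - σ²)²`, vanishing exactly at `λ = σ²`. For the rate, divide numerator and
denominator of `n(λ² + nσ²)/(λ + n)²` by `n²`.
-/

open Filter Topology

noncomputable section

-- `s` plays the role of the noise variance `σ²`.
def noSkipMSE (lam n s : ℝ) : ℝ := (lam ^ 2 + n * s) / (lam + n) ^ 2

def bayesMSE (n s : ℝ) : ℝ := s / (n + s)

variable {lam n s : ℝ}

theorem noSkipMSE_sub_bayesMSE (hlam : lam + n ≠ 0) (hs : n + s ≠ 0) :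
    noSkipMSE lam n s - bayesMSE n s = n * (lam - s) ^ 2 / ((lam + n) ^ 2 * (n + s)) := by
  unfold noSkipMSE bayesMSE
  field_simp
  ring

theorem bayesMSE_le_noSkipMSE (hn : 0 ≤ n) (hs : 0 < n + s) (hlam : lam + n ≠ 0) :
    bayesMSE n s ≤ noSkipMSE lam n s := by
  rw [← sub_nonneg, noSkipMSE_sub_bayesMSE hlam hs.ne']
  positivity

theorem noSkipMSE_eq_bayesMSE_iff (hn : n ≠ 0) (hs : n + s ≠ 0) (hlam : lam + n ≠ 0) :
    noSkipMSE lam n s = bayesMSE n s ↔ lam = s := by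
  rw [← sub_eq_zero, noSkipMSE_sub_bayesMSE hlam hs]
  simp [hn, hs, hlam, sub_eq_zero]

theorem tendsto_natCast_mul_noSkipMSE (lam s : ℝ) :
    Tendsto (fun n : ℕ => (n : ℝ) * noSkipMSE lam n s) atTop (𝓝 s) := by
  have hinv : Tendsto (fun n : ℕ => (n : ℝ)⁻¹) atTop (𝓝 0) :=
    tendsto_inv_atTop_zero.comp tendsto_natCast_atTop_atTop
  have hlim : Tendsto (fun n : ℕ => (lam ^ 2 * (n : ℝ)⁻¹ + s) / (lam * (n : ℝ)⁻¹ + 1) ^ 2)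
      atTop (𝓝 s) := by
    simpa [Pi.div_def] using ((hinv.const_mul (lam ^ 2)).add_const s).div
      (((hinv.const_mul lam).add_const 1).pow 2) (by norm_num)
  refine hlim.congr' ?_
  filter_upwards [eventually_ne_atTop 0] with n hn
  have hn : (n : ℝ) ≠ 0 := Nat.cast_ne_zero.mpr hn
  unfold noSkipMSE
  field_simp

end

theorem stmt_18_general (σ : ℝ) :
    (∀ (n : ℕ), 1 ≤ n → ∀ lam : ℝ, 0 ≤ lam →
      σ ^ 2 / (n + σ ^ 2) ≤ (lam ^ 2 + n * σ ^ 2) / (lam + n) ^ 2 ∧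
      ((lam ^ 2 + n * σ ^ 2) / (lam + n) ^ 2 = σ ^ 2 / (n + σ ^ 2) ↔ lam = σ ^ 2)) ∧
    ∀ lam : ℝ, 0 ≤ lam →
      Filter.Tendsto
        (fun n : ℕ => (n : ℝ) * (lam ^ 2 + n * σ ^ 2) / (lam + n) ^ 2)
        Filter.atTop (nhds (σ ^ 2)) := by
  refine ⟨fun n hn lam hlam => ?_, fun lam _ => ?_⟩
  · have hn : (0 : ℝ) < n := by exact_mod_cast hn
    have hs : (0 : ℝ) < n + σ ^ 2 := by positivity
    have hlam : lam + n ≠ 0 := by positivity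
    exact ⟨bayesMSE_le_noSkipMSE hn.le hs hlam, noSkipMSE_eq_bayesMSE_iff hn.ne' hs.ne' hlam⟩
  · simpa only [noSkipMSE, mul_div_assoc] using tendsto_natCast_mul_noSkipMSE lam (σ ^ 2)

/-- The no-skip-connection MSE dominates the Bayes-optimal MSE, with equality iff
`λ = σ²`; moreover `n·(λ²+nσ²)/(λ+n)² → σ²`, so the MSE decays as `Θ(1/n)`. -/
theorem stmt_18 (σ : ℝ) (hσ : 0 < σ) :
    (∀ (n : ℕ), 1 ≤ n → ∀ lam : ℝ, 0 ≤ lam →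
      σ ^ 2 / (n + σ ^ 2) ≤ (lam ^ 2 + n * σ ^ 2) / (lam + n) ^ 2 ∧
      ((lam ^ 2 + n * σ ^ 2) / (lam + n) ^ 2 = σ ^ 2 / (n + σ ^ 2) ↔ lam = σ ^ 2)) ∧
    ∀ lam : ℝ, 0 ≤ lam →
      Filter.Tendsto
        (fun n : ℕ => (n : ℝ) * (lam ^ 2 + n * σ ^ 2) / (lam + n) ^ 2)
        Filter.atTop (nhds (σ ^ 2)) :=
  stmt_18_general σ
end
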